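/- arXiv:1407.4018 — 2 statements merged into one kernel-verified Lean document; each statement's English description precedes it below -/
import Mathlib

section
/- Let X be a Banach space with the Daugavet property and let T: X → X be a Lipschitz map. Then there is a closed separable linear subspace E ⊆ X having the Daugavet property such that T(E) ⊆ E and the Lipschitz seminorm of the restriction T|_E equals the Lipschitz seminorm of T. -/
open Set Metric Topology

/-- The Lipschitz seminorm `‖f‖ = sup { ‖f x₁ - f x₂‖ / ‖x₁ - x₂‖ : x₁ ≠ x₂ }`. -/
noncomputable def lipSemi {X Y : Type*} [NormedAddCommGroup X] [NormedAddCommGroup Y]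
    (f : X → Y) : ℝ :=
  sSup {r : ℝ | ∃ x₁ x₂ : X, x₁ ≠ x₂ ∧ r = ‖f x₁ - f x₂‖ / ‖x₁ - x₂‖}

/-- The Lip-slice `S(S_X, f, ε)` of the unit sphere generated by a Lipschitz
functional `f : X → ℝ` and `ε > 0`. -/
def lipSlice {X : Type*} [NormedAddCommGroup X] [NormedSpace ℝ X]
    (f : X → ℝ) (ε : ℝ) : Set X :=
  {z | ∃ x₁ x₂ : X, x₁ ≠ x₂ ∧ z = ‖x₁ - x₂‖⁻¹ • (x₁ - x₂) ∧
    lipSemi f - ε < (f x₁ - f x₂) / ‖x₁ - x₂‖}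

/-- `S` is a Lip-slice of the unit sphere of `X`. -/
def IsLipSlice {X : Type*} [NormedAddCommGroup X] [NormedSpace ℝ X] (S : Set X) : Prop :=
  ∃ (f : X → ℝ) (ε : ℝ), (∃ C, LipschitzWith C f) ∧ (∃ x y : X, f x ≠ f y) ∧ 0 < ε ∧
    S = lipSlice f ε

/-- A rank-one bounded linear operator: `T = g(·) • u`. -/
def RankOne (𝕜 : Type*) [RCLike 𝕜] {X : Type*} [NormedAddCommGroup X] [NormedSpace 𝕜 X]
    (T : X →L[𝕜] X) : Prop :=
  ∃ (g : X →L[𝕜] 𝕜) (u : X), ∀ x, T x = g x • u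

/-- The Daugavet property: every rank-one operator satisfies `‖Id + T‖ = 1 + ‖T‖`. -/
def DaugavetProperty (𝕜 : Type*) [RCLike 𝕜] (X : Type*) [NormedAddCommGroup X]
    [NormedSpace 𝕜 X] : Prop :=
  ∀ T : X →L[𝕜] X, RankOne 𝕜 T → ‖ContinuousLinearMap.id 𝕜 X + T‖ = 1 + ‖T‖

/-- The alternative Daugavet property: every rank-one operator satisfies
`max_{θ ∈ 𝕋} ‖Id + θT‖ = 1 + ‖T‖`. -/
def AltDaugavetProperty (𝕜 : Type*) [RCLike 𝕜] (X : Type*) [NormedAddCommGroup X]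
    [NormedSpace 𝕜 X] : Prop :=
  ∀ T : X →L[𝕜] X, RankOne 𝕜 T →
    IsGreatest {r : ℝ | ∃ θ : 𝕜, ‖θ‖ = 1 ∧ r = ‖ContinuousLinearMap.id 𝕜 X + θ • T‖}
      (1 + ‖T‖)

/-- `S` is a slice of the set `A`: a nonempty set of the form `{x ∈ A | Re f x > α}`
with `f` a nonzero continuous linear functional. -/
def IsSlice (𝕜 : Type*) [RCLike 𝕜] {X : Type*} [NormedAddCommGroup X] [NormedSpace 𝕜 X]
    (A S : Set X) : Prop :=
  S.Nonempty ∧ ∃ (f : X →L[𝕜] 𝕜) (α : ℝ), f ≠ 0 ∧ S = {x ∈ A | α < RCLike.re (f x)}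

/-- Slicely countably determined set. -/
def IsSCD (𝕜 : Type*) [RCLike 𝕜] {X : Type*} [NormedAddCommGroup X] [NormedSpace 𝕜 X]
    [NormedSpace ℝ X] (A : Set X) : Prop :=
  ∃ S : ℕ → Set X, (∀ n, IsSlice 𝕜 A (S n)) ∧
    ∀ B ⊆ A, (∀ n, (B ∩ S n).Nonempty) → A ⊆ closure (convexHull ℝ B)

/-- The slope set of a map `T : X → X`. -/
def lipSlope {X : Type*} [NormedAddCommGroup X] [NormedSpace ℝ X] (T : X → X) : Set X :=
  {z | ∃ x₁ x₂ : X, x₁ ≠ x₂ ∧ z = ‖x₁ - x₂‖⁻¹ • (T x₁ - T x₂)}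

/-- `K(X*)`: the intersection of the dual unit sphere with the weak*-closure of the
set of extreme points of the dual unit ball, as a subset of the weak* dual. -/
noncomputable def Kdual (𝕜 : Type*) [RCLike 𝕜] (X : Type*) [NormedAddCommGroup X]
    [NormedSpace 𝕜 X] : Set (WeakDual 𝕜 X) :=
  {φ | ‖WeakDual.toStrongDual φ‖ = 1} ∩
    closure (WeakDual.toStrongDual ⁻¹'
      Set.extremePoints ℝ (closedBall (0 : StrongDual 𝕜 X) 1))

/-- `D(S, ε) = {x* ∈ K(X*) : ∃ y ∈ S, Re x*(y) > 1 - ε}`. -/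
def Dset (𝕜 : Type*) [RCLike 𝕜] {X : Type*} [NormedAddCommGroup X] [NormedSpace 𝕜 X]
    (S : Set X) (ε : ℝ) : Set ↥(Kdual 𝕜 X) :=
  {φ | ∃ y ∈ S, 1 - ε < RCLike.re ((φ : WeakDual 𝕜 X) y)}

/-- `D̃(S, ε) = {x* ∈ K(X*) : ∃ y ∈ S, |x*(y)| > 1 - ε}`. -/
def DsetAbs (𝕜 : Type*) [RCLike 𝕜] {X : Type*} [NormedAddCommGroup X] [NormedSpace 𝕜 X]
    (S : Set X) (ε : ℝ) : Set ↥(Kdual 𝕜 X) :=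
  {φ | ∃ y ∈ S, 1 - ε < ‖(φ : WeakDual 𝕜 X) y‖}

/-- A set is dentable if it admits slices of arbitrarily small diameter. -/
def Dentable (𝕜 : Type*) [RCLike 𝕜] {X : Type*} [NormedAddCommGroup X] [NormedSpace 𝕜 X]
    (B : Set X) : Prop :=
  ∀ ε : ℝ, 0 < ε → ∃ S : Set X, IsSlice 𝕜 B S ∧ diam S < ε

/-- A sequence equivalent to the unit vector basis of `ℓ₁`. -/
def IsL1Seq (𝕜 : Type*) [RCLike 𝕜] {X : Type*} [NormedAddCommGroup X] [NormedSpace 𝕜 X]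
    (x : ℕ → X) : Prop :=
  ∃ C : ℝ, 1 ≤ C ∧ ∀ (n : ℕ) (a : ℕ → 𝕜),
    C⁻¹ * (∑ k ∈ Finset.range n, ‖a k‖) ≤ ‖∑ k ∈ Finset.range n, a k • x k‖ ∧
    ‖∑ k ∈ Finset.range n, a k • x k‖ ≤ C * (∑ k ∈ Finset.range n, ‖a k‖)

/-- Numerical radius of a bounded linear operator. -/
noncomputable def numRadius (𝕜 : Type*) [RCLike 𝕜] {X : Type*} [NormedAddCommGroup X]
    [NormedSpace 𝕜 X] (T : X →L[𝕜] X) : ℝ :=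
  sSup {r : ℝ | ∃ (x : X) (f : X →L[𝕜] 𝕜), ‖x‖ = 1 ∧ ‖f‖ = 1 ∧ f x = 1 ∧ r = ‖f (T x)‖}

/-- Numerical index of a Banach space. -/
noncomputable def numIndex (𝕜 : Type*) [RCLike 𝕜] (X : Type*) [NormedAddCommGroup X]
    [NormedSpace 𝕜 X] : ℝ :=
  sInf {r : ℝ | ∃ T : X →L[𝕜] X, ‖T‖ = 1 ∧ r = numRadius 𝕜 T}

/-- Numerical radius of a Lipschitz map. -/
noncomputable def lipNumRadius (𝕜 : Type*) [RCLike 𝕜] {X : Type*} [NormedAddCommGroup X]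
    [NormedSpace 𝕜 X] (T : X → X) : ℝ :=
  sSup {r : ℝ | ∃ (x y : X) (f : X →L[𝕜] 𝕜), x ≠ y ∧
    RCLike.re (f (x - y)) = ‖f‖ * ‖x - y‖ ∧ ‖f‖ * ‖x - y‖ = ‖x - y‖ ^ 2 ∧
    r = ‖f (T x - T y)‖ / ‖x - y‖ ^ 2}

/-- The Lipschitz numerical index of a Banach space. -/
noncomputable def lipNumIndex (𝕜 : Type*) [RCLike 𝕜] (X : Type*) [NormedAddCommGroup X]
    [NormedSpace 𝕜 X] : ℝ :=
  sInf {r : ℝ | ∃ T : X → X, (∃ C, LipschitzWith C T) ∧ lipSemi T = 1 ∧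
    r = lipNumRadius 𝕜 T}

/-- The slice `S(S_X, Re f, ε)` of the unit sphere given by a linear functional. -/
def sphereSlice (𝕜 : Type*) [RCLike 𝕜] {X : Type*} [NormedAddCommGroup X]
    [NormedSpace 𝕜 X] (f : X →L[𝕜] 𝕜) (ε : ℝ) : Set X :=
  {z | ‖z‖ = 1 ∧ 1 - ε < RCLike.re (f z)}

/-- `𝕋 • S`, the set of rotations of elements of `S` by unimodular scalars. -/
def circleSmul (𝕜 : Type*) [RCLike 𝕜] {X : Type*} [NormedAddCommGroup X]
    [NormedSpace 𝕜 X] (S : Set X) : Set X :=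
  {w | ∃ (θ : 𝕜) (z : X), ‖θ‖ = 1 ∧ z ∈ S ∧ w = θ • z}

/-- Lushness of a Banach space. -/
def Lush (𝕜 : Type*) [RCLike 𝕜] (X : Type*) [NormedAddCommGroup X] [NormedSpace 𝕜 X]
    [NormedSpace ℝ X] : Prop :=
  ∀ x y : X, ‖x‖ = 1 → ‖y‖ = 1 → ∀ ε : ℝ, 0 < ε → ∃ f : X →L[𝕜] 𝕜, ‖f‖ = 1 ∧
    y ∈ sphereSlice 𝕜 f ε ∧
    infDist x (convexHull ℝ (circleSmul 𝕜 (sphereSlice 𝕜 f ε))) < ε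

/-!
By the Kadets–Shvidkoy–Sirotkin–Werner characterization, `X` has the Daugavet property iff for
every unit vector `x` and every `ε > 0` the unit ball lies in the closed convex hull of
`{y ∈ B_X | ‖x + y‖ > 2 - ε}`. Unlike the property itself, this condition involves no
operators or functionals, so it passes to the closure `E` of a countable set `Q` as soon as, for
all `a, b ∈ Q`, countably many witnesses of the condition for `a / ‖a‖` and `b` lie in `Q`.
Closing a countable set under these witnesses, under `T`, and under countable dense subsets of
the spans of its finite subsets, starting from pairs of points whose difference quotients
approach `lipSemi T`, gives a separable `T`-invariant subspace with the Daugavet property on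
which `T` keeps its Lipschitz seminorm.
-/

section NearlyAligned

variable {X : Type*} [NormedAddCommGroup X]

def nearlyAligned (x : X) (ε : ℝ) : Set X := {y | ‖y‖ ≤ 1 ∧ 2 - ε < ‖x + y‖}

lemma nearlyAligned_subset {x u : X} {δ ε : ℝ} (h : ‖u - x‖ + δ ≤ ε) :
    nearlyAligned u δ ⊆ nearlyAligned x ε := by
  rintro y ⟨hy, huy⟩
  refine ⟨hy, ?_⟩
  have : ‖u + y‖ ≤ ‖x + y‖ + ‖u - x‖ := by
    calc ‖u + y‖ = ‖(x + y) + (u - x)‖ := by congr 1; abel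
      _ ≤ ‖x + y‖ + ‖u - x‖ := norm_add_le _ _
  linarith

variable [NormedSpace ℝ X]

lemma one_add_sub_mul_le_norm_add_smul {v z : X} (hv : ‖v‖ = 1) {ε : ℝ}
    (hz : z ∈ nearlyAligned v ε) {c : ℝ} (hc : 0 ≤ c) :
    1 + c - (1 + c) * ε ≤ ‖z + c • v‖ := by
  obtain ⟨hz1, hvz⟩ := hz
  have hε : 0 ≤ ε := by linarith [norm_add_le v z]
  rcases le_total c 1 with hc1 | hc1
  · have : ‖v + z‖ ≤ ‖z + c • v‖ + (1 - c) := by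
      calc ‖v + z‖ = ‖(z + c • v) + (1 - c) • v‖ := by congr 1; module
        _ ≤ ‖z + c • v‖ + ‖(1 - c) • v‖ := norm_add_le _ _
        _ = ‖z + c • v‖ + (1 - c) := by
            rw [norm_smul, hv, Real.norm_of_nonneg (by linarith), mul_one]
    nlinarith
  · have : c * ‖v + z‖ ≤ ‖z + c • v‖ + (c - 1) := by
      calc c * ‖v + z‖ = ‖c • (v + z)‖ := by rw [norm_smul, Real.norm_of_nonneg hc]
        _ = ‖(z + c • v) + (c - 1) • z‖ := by congr 1; module
        _ ≤ ‖z + c • v‖ + ‖(c - 1) • z‖ := norm_add_le _ _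
        _ ≤ ‖z + c • v‖ + (c - 1) := by
            rw [norm_smul, Real.norm_of_nonneg (by linarith)]; nlinarith [norm_nonneg z]
    nlinarith

lemma norm_inv_smul_sub_le {a x : X} (hx : ‖x‖ = 1) : ‖‖a‖⁻¹ • a - x‖ ≤ 2 * ‖a - x‖ := by
  rcases eq_or_ne a 0 with rfl | ha
  · simp [hx]
  have hna : ‖a‖ ≠ 0 := norm_ne_zero_iff.mpr ha
  have : ‖‖a‖⁻¹ • a - a‖ = |‖x‖ - ‖a‖| := by
    rw [show ‖a‖⁻¹ • a - a = (‖a‖⁻¹ - 1) • a by module, norm_smul, Real.norm_eq_abs,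
      ← abs_norm a, ← abs_mul, abs_norm, sub_mul, inv_mul_cancel₀ hna, one_mul, hx]
  calc ‖‖a‖⁻¹ • a - x‖ ≤ ‖‖a‖⁻¹ • a - a‖ + ‖a - x‖ := norm_sub_le_norm_sub_add_norm_sub _ _ _
    _ ≤ ‖a - x‖ + ‖a - x‖ := by
        rw [this, norm_sub_rev a]; gcongr; exact abs_norm_sub_norm_le x a
    _ = 2 * ‖a - x‖ := by ring

end NearlyAligned

def DaugavetHullProperty (X : Type*) [NormedAddCommGroup X] [NormedSpace ℝ X] : Prop :=
  ∀ x : X, ‖x‖ = 1 → ∀ ε > 0, closedBall 0 1 ⊆ closure (convexHull ℝ (nearlyAligned x ε))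

lemma exists_countable_subset_mem_closure_convexHull {E : Type*} [AddCommGroup E] [Module ℝ E]
    [TopologicalSpace E] [FrechetUrysohnSpace E] {D : Set E} {b : E}
    (hb : b ∈ closure (convexHull ℝ D)) :
    ∃ F ⊆ D, F.Countable ∧ b ∈ closure (convexHull ℝ F) := by
  obtain ⟨z, hz, hzb⟩ := mem_closure_iff_seq_limit.mp hb
  simp only [convexHull_eq_union_convexHull_finite_subsets D, mem_iUnion] at hz
  choose t htD hzt using hz
  refine ⟨⋃ n, (t n : Set E), iUnion_subset htD, countable_iUnion fun n => (t n).countable_toSet,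
    mem_closure_of_tendsto hzb (Filter.Eventually.of_forall fun n => ?_)⟩
  exact convexHull_mono (subset_iUnion (fun n => (t n : Set E)) n) (hzt n)

lemma Set.Countable.exists_superset_forall_finset_subset {α : Type*} {S : Set α}
    (hS : S.Countable) (G : Finset α → Set α) (hG : ∀ t, (G t).Countable) :
    ∃ Q, S ⊆ Q ∧ Q.Countable ∧ ∀ t : Finset α, ↑t ⊆ Q → G t ⊆ Q := by
  let step (A : Set α) : Set α := A ∪ ⋃ t ∈ {t : Finset α | ↑t ⊆ A}, G t
  have hstep {A : Set α} (hA : A.Countable) : (step A).Countable := by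
    refine hA.union (Countable.biUnion ?_ fun t _ => hG t)
    refine ((countable_ofPred_finite_subset hA).preimage Finset.coe_injective).mono ?_
    exact fun t (ht : ↑t ⊆ A) => ⟨t.finite_toSet, ht⟩
  have hmono : Monotone fun n => step^[n] S :=
    monotone_nat_of_le_succ fun n => by
      rw [Function.iterate_succ_apply']; exact subset_union_left
  refine ⟨⋃ n, step^[n] S, subset_iUnion (fun n => step^[n] S) 0,
    countable_iUnion fun n => ?_, fun t ht => ?_⟩
  · induction n with
    | zero => exact hS
    | succ n ih => rw [Function.iterate_succ_apply']; exact hstep ih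
  · obtain ⟨n, hn⟩ := hmono.directed_le.exists_mem_subset_of_finset_subset_biUnion ht
    refine Subset.trans ?_ (subset_iUnion _ (n + 1))
    rw [Function.iterate_succ_apply']
    exact subset_union_right.trans' (subset_biUnion_of_mem (u := G) hn)

lemma Submodule.coe_topologicalClosure_span_eq_closure {R M : Type*} [Semiring R]
    [AddCommMonoid M] [Module R M] [TopologicalSpace M] [ContinuousAdd M]
    [ContinuousConstSMul R M] {Q : Set M}
    (hQ : ∀ t : Finset M, ↑t ⊆ Q → (span R (t : Set M) : Set M) ⊆ closure Q) :
    ((span R Q).topologicalClosure : Set M) = closure Q := by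
  rw [Submodule.topologicalClosure_coe]
  refine (closure_minimal (fun v hv => ?_) isClosed_closure).antisymm
    (closure_mono subset_span)
  obtain ⟨t, htQ, hvt⟩ := mem_span_finite_of_mem_span hv
  exact hQ t htQ hvt

section Daugavet

open RCLike Filter

variable {𝕜 X : Type*} [RCLike 𝕜] [NormedAddCommGroup X] [NormedSpace 𝕜 X]

lemma RCLike.norm_sub_ofReal_sq_le {w : 𝕜} {r : ℝ} (hw : ‖w‖ ≤ r) :
    ‖w - r‖ ^ 2 ≤ 2 * r * (r - re w) := by
  have hsq : ‖w - r‖ ^ 2 = ‖w‖ ^ 2 - 2 * r * re w + r ^ 2 := by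
    rw [norm_sq_eq_def, norm_sq_eq_def]
    simp only [map_sub, ofReal_re, ofReal_im]
    ring
  nlinarith [norm_nonneg w]

lemma exists_norm_lt_one_lt_re_apply (g : StrongDual 𝕜 X) {α : ℝ} (hα : α < ‖g‖) :
    ∃ y : X, ‖y‖ < 1 ∧ α < re (g y) := by
  obtain ⟨y, hy, hgy⟩ := g.exists_lt_apply_of_lt_opNorm hα
  obtain ⟨θ, hθ, hθy⟩ := exists_norm_eq_mul_self (g y)
  refine ⟨θ • y, by rwa [norm_smul, hθ, one_mul], ?_⟩
  rwa [map_smul, smul_eq_mul, ← hθy, ofReal_re]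

lemma DaugavetProperty.nontrivial (hX : DaugavetProperty 𝕜 X) : Nontrivial X := by
  by_contra h
  rw [not_nontrivial_iff_subsingleton] at h
  simpa [Subsingleton.elim (ContinuousLinearMap.id 𝕜 X) 0] using hX 0 ⟨0, 0, by simp⟩

lemma DaugavetProperty.exists_mem_nearlyAligned_one_sub_lt_re (hX : DaugavetProperty 𝕜 X)
    {x : X} (hx : ‖x‖ = 1) {g : StrongDual 𝕜 X} (hg : ‖g‖ = 1) {ε : ℝ} (hε : 0 < ε) :
    ∃ y ∈ nearlyAligned x ε, 1 - ε < re (g y) := by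
  have hnorm : ‖ContinuousLinearMap.id 𝕜 X + g.smulRight x‖ = 2 := by
    rw [hX _ ⟨g, x, fun _ => rfl⟩, ContinuousLinearMap.norm_smulRight_apply, hg, hx]; norm_num
  obtain ⟨y, hy, hlt⟩ := (ContinuousLinearMap.id 𝕜 X + g.smulRight x).exists_lt_apply_of_lt_opNorm
    (r := 2 - ε / 2) (by linarith)
  change 2 - ε / 2 < ‖y + g y • x‖ at hlt
  have hgy : ‖g y‖ ≤ 1 := (g.le_opNorm y).trans (by rw [hg, one_mul]; exact hy.le)
  have hgy' : 1 - ε / 2 < ‖g y‖ := by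
    have := (norm_add_le y (g y • x)).trans_lt' hlt
    rw [norm_smul, hx, mul_one] at this
    linarith
  -- Rotating `y` makes `g y` real; then `x + θ • y` is `θ • (y + g y • x)` up to a small
  -- multiple of `x`.
  obtain ⟨θ, hθ, hθy⟩ := exists_norm_eq_mul_self (g y)
  refine ⟨θ • y, ⟨by rw [norm_smul, hθ, one_mul]; exact hy.le, ?_⟩, ?_⟩
  · have hsplit : x + θ • y = θ • (y + g y • x) + ((1 - ‖g y‖ : ℝ) : 𝕜) • x := by
      rw [smul_add, smul_smul, ← hθy, ofReal_sub, ofReal_one]; module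
    have := norm_sub_norm_le (θ • (y + g y • x)) (-(((1 - ‖g y‖ : ℝ) : 𝕜) • x))
    rw [sub_neg_eq_add, ← hsplit, norm_neg, norm_smul, norm_smul, hθ, one_mul, norm_ofReal,
      hx, mul_one, abs_of_nonneg (by linarith)] at this
    linarith
  · rw [map_smul, smul_eq_mul, ← hθy, ofReal_re]
    linarith

lemma Submodule.nearlyAligned_eq_preimage_coe (E : Submodule 𝕜 X) (x : E) (ε : ℝ) :
    nearlyAligned x ε = (↑) ⁻¹' nearlyAligned (x : X) ε := by
  ext y
  simp [nearlyAligned]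

variable [NormedSpace ℝ X] [IsScalarTower ℝ 𝕜 X]

lemma closedBall_subset_closure_convexHull {D : Set X}
    (hD : ∀ g : StrongDual 𝕜 X, ∀ α < ‖g‖, ∃ y ∈ D, α < re (g y)) :
    closedBall (0 : X) 1 ⊆ closure (convexHull ℝ D) := by
  intro b hb
  by_contra hbD
  obtain ⟨g, u, hgu, hub⟩ := RCLike.geometric_hahn_banach_closed_point (𝕜 := 𝕜)
    (convex_convexHull ℝ D).closure isClosed_closure hbD
  have hgb : re (g b) ≤ ‖g‖ :=
    calc re (g b) ≤ ‖g b‖ := re_le_norm _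
      _ ≤ ‖g‖ * ‖b‖ := g.le_opNorm b
      _ ≤ ‖g‖ := mul_le_of_le_one_right (norm_nonneg g) (mem_closedBall_zero_iff.mp hb)
  obtain ⟨y, hyD, hy⟩ := hD g u (hub.trans_le hgb)
  exact (hgu y (subset_closure (subset_convexHull ℝ D hyD))).not_gt hy

lemma closure_convexHull_subset_re_le {g : StrongDual 𝕜 X} {D : Set X} {α : ℝ}
    (hD : ∀ y ∈ D, re (g y) ≤ α) : closure (convexHull ℝ D) ⊆ {y | re (g y) ≤ α} := by
  refine closure_minimal (convexHull_min hD (convex_halfSpace_le ?_ α)) ?_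
  · exact ⟨fun y z => by simp, fun c y => by simp [RCLike.smul_re]⟩
  · exact isClosed_le (by fun_prop) continuous_const

lemma DaugavetHullProperty.exists_mem_nearlyAligned_lt_re (hH : DaugavetHullProperty X)
    {x : X} (hx : ‖x‖ = 1) {ε : ℝ} (hε : 0 < ε) (g : StrongDual 𝕜 X) {α : ℝ} (hα : α < ‖g‖) :
    ∃ z ∈ nearlyAligned x ε, α < re (g z) := by
  obtain ⟨y, hy, hgy⟩ := exists_norm_lt_one_lt_re_apply g hα
  by_contra! h
  have hy' : y ∈ closedBall (0 : X) 1 := mem_closedBall_zero_iff.mpr hy.le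
  exact (closure_convexHull_subset_re_le h (hH x hx ε hε hy')).not_gt hgy

lemma DaugavetHullProperty.le_norm_id_add_smulRight (hH : DaugavetHullProperty X)
    {g : StrongDual 𝕜 X} (hg : g ≠ 0) {u : X} (hu : u ≠ 0) {s : ℝ} (hs : 0 < s) (hs1 : s ≤ 1) :
    1 + ‖g‖ * ‖u‖ - (1 + 3 * (‖g‖ * ‖u‖)) * s ≤ ‖ContinuousLinearMap.id 𝕜 X + g.smulRight u‖ := by
  -- For `z` nearly aligned with `u / ‖u‖` and `re (g z)` close to `‖g‖`, `g z` is close to `‖g‖`,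
  -- so `z + g z • u` is close to `z + ‖g‖ • u`, whose norm is close to `1 + ‖g‖ * ‖u‖`.
  set c := ‖g‖ * ‖u‖
  have hg0 : 0 < ‖g‖ := norm_pos_iff.mpr hg
  have hv : ‖‖u‖⁻¹ • u‖ = 1 := norm_smul_inv_norm hu
  obtain ⟨z, hz, hgz⟩ := hH.exists_mem_nearlyAligned_lt_re hv (pow_pos hs 2) g
    (α := ‖g‖ * (1 - s ^ 2)) (by nlinarith [mul_pos hg0 (pow_pos hs 2)])
  have hgz_le : ‖g z‖ ≤ ‖g‖ := (g.le_opNorm z).trans (mul_le_of_le_one_right hg0.le hz.1)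
  have hclose : ‖g z - ‖g‖‖ ≤ 2 * ‖g‖ * s := by
    refine le_of_sq_le_sq ?_ (by positivity)
    nlinarith [norm_sub_ofReal_sq_le hgz_le]
  have hcv : c • (‖u‖⁻¹ • u) = (‖g‖ : 𝕜) • u := by
    rw [smul_smul, mul_assoc, mul_inv_cancel₀ (norm_ne_zero_iff.mpr hu), mul_one,
      ← RCLike.real_smul_eq_coe_smul]
  have haligned := one_add_sub_mul_le_norm_add_smul hv hz (by positivity : 0 ≤ c)
  rw [hcv] at haligned
  have hpert : ‖(g z - ‖g‖) • u‖ ≤ 2 * c * s := by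
    rw [norm_smul]; nlinarith [norm_nonneg u]
  have hs2 : (1 + c) * s ^ 2 ≤ (1 + c) * s := by gcongr; nlinarith
  calc 1 + c - (1 + 3 * c) * s ≤ 1 + c - (1 + c) * s ^ 2 - 2 * c * s := by linarith
    _ ≤ ‖z + (‖g‖ : 𝕜) • u‖ - ‖(g z - ‖g‖) • u‖ := by linarith
    _ ≤ ‖z + g z • u‖ := by
        rw [sub_le_iff_le_add]
        calc ‖z + (‖g‖ : 𝕜) • u‖ = ‖(z + g z • u) - (g z - ‖g‖) • u‖ := by congr 1; module
          _ ≤ _ := norm_sub_le _ _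
    _ = ‖(ContinuousLinearMap.id 𝕜 X + g.smulRight u) z‖ := rfl
    _ ≤ ‖ContinuousLinearMap.id 𝕜 X + g.smulRight u‖ :=
        (ContinuousLinearMap.le_opNorm _ z).trans (mul_le_of_le_one_right (norm_nonneg _) hz.1)

lemma DaugavetProperty.daugavetHullProperty (hX : DaugavetProperty 𝕜 X) :
    DaugavetHullProperty X := by
  intro x hx ε hε
  refine closedBall_subset_closure_convexHull (𝕜 := 𝕜) fun g α hα => ?_
  rcases eq_or_ne g 0 with rfl | hg
  · refine ⟨x, ⟨hx.le, ?_⟩, by simpa using hα⟩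
    rw [← two_smul ℝ x, norm_smul, hx]; norm_num; exact hε
  have hg0 : 0 < ‖g‖ := norm_pos_iff.mpr hg
  set δ := min ε (1 - α / ‖g‖)
  have hδ : 0 < δ := lt_min hε (by rw [sub_pos, div_lt_one hg0]; exact hα)
  obtain ⟨y, hy, hgy⟩ := hX.exists_mem_nearlyAligned_one_sub_lt_re hx
    (norm_smul_inv_norm (𝕜 := 𝕜) hg) hδ
  refine ⟨y, nearlyAligned_subset (by simp [δ]) hy, ?_⟩
  rw [smul_apply, smul_eq_mul, ← ofReal_inv, re_ofReal_mul, ← div_eq_inv_mul,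
    lt_div_iff₀ hg0] at hgy
  have : α / ‖g‖ ≤ 1 - δ := by linarith [min_le_right ε (1 - α / ‖g‖)]
  rw [div_le_iff₀ hg0] at this
  linarith

lemma DaugavetHullProperty.daugavetProperty [Nontrivial X] (hH : DaugavetHullProperty X) :
    DaugavetProperty 𝕜 X := by
  rintro T ⟨g, u, hT⟩
  obtain rfl : T = g.smulRight u := ContinuousLinearMap.ext hT
  refine le_antisymm ((norm_add_le _ _).trans (by rw [ContinuousLinearMap.norm_id])) ?_
  rcases eq_or_ne g 0 with rfl | hg
  · simp
  rcases eq_or_ne u 0 with rfl | hu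
  · simp
  rw [ContinuousLinearMap.norm_smulRight_apply]
  have hlim : Tendsto (fun s : ℝ => 1 + ‖g‖ * ‖u‖ - (1 + 3 * (‖g‖ * ‖u‖)) * s) (𝓝[>] 0)
      (𝓝 (1 + ‖g‖ * ‖u‖)) := by
    refine tendsto_nhdsWithin_of_tendsto_nhds ?_
    have : Continuous fun s : ℝ => 1 + ‖g‖ * ‖u‖ - (1 + 3 * (‖g‖ * ‖u‖)) * s := by fun_prop
    simpa using this.tendsto 0
  exact le_of_tendsto hlim (eventually_of_mem (Ioc_mem_nhdsGT zero_lt_one) fun s hs =>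
    hH.le_norm_id_add_smulRight hg hu hs.1 hs.2)

lemma Submodule.mem_closure_convexHull_preimage_coe {E : Submodule 𝕜 X}
    (hE : IsClosed (E : Set X)) {A : Set X} {b : E}
    (hb : (b : X) ∈ closure (convexHull ℝ ((E : Set X) ∩ A))) :
    b ∈ closure (convexHull ℝ ((↑) ⁻¹' A : Set E)) := by
  have himage : (E : Set X) ∩ A = Subtype.val '' ((↑) ⁻¹' A : Set E) := by
    ext y
    exact ⟨fun ⟨hy, hyA⟩ => ⟨⟨y, hy⟩, hyA, rfl⟩, by rintro ⟨y, hyA, rfl⟩; exact ⟨y.2, hyA⟩⟩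
  have hval : ⇑(E.subtype.restrictScalars ℝ) = Subtype.val := rfl
  have hcl : Topology.IsClosedEmbedding (Subtype.val : E → X) := hE.isClosedEmbedding_subtypeVal
  rw [himage, ← hval, ← LinearMap.image_convexHull, hval, hcl.closure_image_eq] at hb
  exact Subtype.val_injective.mem_set_image.mp hb

lemma Submodule.daugavetHullProperty_of_eq_closure {E : Submodule 𝕜 X} {Q : Set X}
    (hE : (E : Set X) = closure Q)
    (hQ : ∀ a ∈ Q, a ≠ 0 → ∀ b ∈ Q ∩ ball 0 1, ∀ n : ℕ,
      b ∈ closure (convexHull ℝ (Q ∩ nearlyAligned (‖a‖⁻¹ • a) (1 / (n + 1))))) :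
    DaugavetHullProperty E := by
  intro x hx ε hε
  rw [← closure_ball (0 : E) one_ne_zero, E.nearlyAligned_eq_preimage_coe]
  refine closure_minimal (fun b hb => ?_) isClosed_closure
  refine E.mem_closure_convexHull_preimage_coe (by rw [hE]; exact isClosed_closure) ?_
  obtain ⟨a, haQ, hxa⟩ := Metric.mem_closure_iff.mp (hE ▸ x.2 : (x : X) ∈ closure Q)
    (min 1 (ε / 4)) (by positivity)
  rw [dist_eq_norm'] at hxa
  have ha : a ≠ 0 := by
    rintro rfl
    rw [zero_sub, norm_neg] at hxa
    exact (hxa.trans_le (min_le_left _ _)).ne (by simpa using hx)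
  obtain ⟨n, hn⟩ := exists_nat_one_div_lt (half_pos hε)
  have haligned : nearlyAligned (‖a‖⁻¹ • a) (1 / (n + 1)) ⊆ nearlyAligned (x : X) ε := by
    refine nearlyAligned_subset ?_
    have := norm_inv_smul_sub_le (a := a) (by simpa using hx : ‖(x : X)‖ = 1)
    linarith [min_le_right 1 (ε / 4)]
  have hQC : Q ∩ ball 0 1 ⊆ closure (convexHull ℝ ((E : Set X) ∩ nearlyAligned x ε)) :=
    fun c hc => closure_mono (convexHull_mono (inter_subset_inter (hE ▸ subset_closure) haligned))
      (hQ a haQ ha c hc n)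
  have hb' : (b : X) ∈ ball 0 1 ∩ closure Q := ⟨by simpa using hb, hE ▸ b.2⟩
  exact closure_minimal (inter_comm Q _ ▸ hQC) isClosed_closure (isOpen_ball.inter_closure hb')

lemma DaugavetHullProperty.exists_isSeparable_invariant_submodule (hH : DaugavetHullProperty X)
    {T : X → X} (hT : Continuous T) {S : Set X} (hS : S.Countable) :
    ∃ E : Submodule 𝕜 X, IsClosed (E : Set X) ∧ TopologicalSpace.IsSeparable (E : Set X) ∧
      S ⊆ E ∧ (∀ x ∈ E, T x ∈ E) ∧ DaugavetHullProperty E := by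
  classical
  choose R hRc hR using fun t : Finset X =>
    (t.countable_toSet.isSeparable.span (R := 𝕜) : TopologicalSpace.IsSeparable _)
  have hF (a b : X) (n : ℕ) : ∃ F ⊆ nearlyAligned (‖a‖⁻¹ • a) (1 / (n + 1)), F.Countable ∧
      (a ≠ 0 → b ∈ closedBall 0 1 → b ∈ closure (convexHull ℝ F)) := by
    by_cases h : a ≠ 0 ∧ b ∈ closedBall 0 1
    · obtain ⟨F, hF, hFc, hbF⟩ := exists_countable_subset_mem_closure_convexHull
        (hH _ (norm_smul_inv_norm (𝕜 := ℝ) h.1) _ Nat.one_div_pos_of_nat h.2)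
      exact ⟨F, hF, hFc, fun _ _ => hbF⟩
    · exact ⟨∅, empty_subset _, countable_empty, fun ha hb => (h ⟨ha, hb⟩).elim⟩
  choose F hFsub hFc hbF using hF
  obtain ⟨Q, hSQ, hQc, hQ⟩ := hS.exists_superset_forall_finset_subset
    (fun t => T '' t ∪ R t ∪ ⋃ (a ∈ t) (b ∈ t) (n : ℕ), F a b n) fun t =>
      ((t.countable_toSet.image T).union (hRc t)).union <| t.countable_toSet.biUnion fun a _ =>
        t.countable_toSet.biUnion fun b _ => countable_iUnion fun n => hFc a b n
  have hE : ((Submodule.span 𝕜 Q).topologicalClosure : Set X) = closure Q :=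
    Submodule.coe_topologicalClosure_span_eq_closure fun t ht =>
      (hR t).trans (closure_mono (subset_union_right.trans (subset_union_left.trans (hQ t ht))))
  refine ⟨_, Submodule.isClosed_topologicalClosure _, hE ▸ hQc.isSeparable.closure,
    hE ▸ hSQ.trans subset_closure, fun x hx => ?_, ?_⟩
  · have hTQ : MapsTo T Q Q := fun q hq =>
      hQ {q} (by simpa using hq) (.inl (.inl (mem_image_of_mem T (by simp))))
    rw [← SetLike.mem_coe, hE] at hx ⊢
    exact map_mem_closure hT hx hTQ
  · refine Submodule.daugavetHullProperty_of_eq_closure hE fun a ha ha0 b hb n => ?_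
    have hFQ : F a b n ⊆ Q := fun y hy => hQ {a, b} (by simp [insert_subset_iff, ha, hb.1])
      (.inr (mem_iUnion₂.2 ⟨a, by simp, mem_iUnion₂.2 ⟨b, by simp, mem_iUnion.2 ⟨n, hy⟩⟩⟩))
    exact closure_mono (convexHull_mono (subset_inter hFQ (hFsub a b n)))
      (hbF a b n ha0 (ball_subset_closedBall hb.2))

end Daugavet

section LipSemi

open Filter

variable {X Y : Type*} [NormedAddCommGroup X] [NormedAddCommGroup Y] {T : X → Y} {C : NNReal}

lemma LipschitzWith.bddAbove_lipSemi_ratios (hT : LipschitzWith C T) :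
    BddAbove {r : ℝ | ∃ x₁ x₂ : X, x₁ ≠ x₂ ∧ r = ‖T x₁ - T x₂‖ / ‖x₁ - x₂‖} := by
  refine ⟨C, ?_⟩
  rintro _ ⟨x₁, x₂, hne, rfl⟩
  rw [div_le_iff₀ (norm_pos_iff.mpr (sub_ne_zero.mpr hne)), ← dist_eq_norm, ← dist_eq_norm]
  exact hT.dist_le_mul x₁ x₂

lemma LipschitzWith.norm_sub_div_le_lipSemi (hT : LipschitzWith C T) {x₁ x₂ : X}
    (hne : x₁ ≠ x₂) : ‖T x₁ - T x₂‖ / ‖x₁ - x₂‖ ≤ lipSemi T :=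
  le_csSup hT.bddAbove_lipSemi_ratios ⟨x₁, x₂, hne, rfl⟩

lemma LipschitzWith.exists_seq_tendsto_lipSemi [Nontrivial X] (hT : LipschitzWith C T) :
    ∃ p q : ℕ → X, (∀ n, p n ≠ q n) ∧
      Tendsto (fun n => ‖T (p n) - T (q n)‖ / ‖p n - q n‖) atTop (𝓝 (lipSemi T)) := by
  obtain ⟨x₁, x₂, hne⟩ := exists_pair_ne X
  obtain ⟨r, -, hr, hrS⟩ := exists_seq_tendsto_sSup
    (S := {r : ℝ | ∃ x₁ x₂ : X, x₁ ≠ x₂ ∧ r = ‖T x₁ - T x₂‖ / ‖x₁ - x₂‖})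
    ⟨_, x₁, x₂, hne, rfl⟩ hT.bddAbove_lipSemi_ratios
  choose p q hpq hr_eq using hrS
  refine ⟨p, q, hpq, ?_⟩
  rwa [show (fun n => ‖T (p n) - T (q n)‖ / ‖p n - q n‖) = r from funext fun n => (hr_eq n).symm]

lemma LipschitzWith.lipSemi_comp_subtype_eq {R : Type*} [Ring R] [Module R X]
    (hT : LipschitzWith C T) (E : Submodule R X) {p q : ℕ → X} (hp : ∀ n, p n ∈ E)
    (hq : ∀ n, q n ∈ E) (hpq : ∀ n, p n ≠ q n)
    (hlim : Tendsto (fun n => ‖T (p n) - T (q n)‖ / ‖p n - q n‖) atTop (𝓝 (lipSemi T))) :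
    lipSemi (fun e : E => T e) = lipSemi T := by
  have hTE : LipschitzWith (C * 1) (fun e : E => T e) :=
    hT.comp (LipschitzWith.subtype_val (E : Set X))
  refine le_antisymm (csSup_le ⟨_, ⟨p 0, hp 0⟩, ⟨q 0, hq 0⟩, ?_, rfl⟩ ?_) ?_
  · exact fun h => hpq 0 (congrArg Subtype.val h)
  · rintro _ ⟨e₁, e₂, hne, rfl⟩
    exact hT.norm_sub_div_le_lipSemi (Subtype.coe_injective.ne hne)
  · refine le_of_tendsto' hlim fun n => ?_
    exact hTE.norm_sub_div_le_lipSemi (x₁ := ⟨p n, hp n⟩) (x₂ := ⟨q n, hq n⟩)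
      fun h => hpq n (congrArg Subtype.val h)

end LipSemi

theorem separable_determination_daugavet_general {𝕜 X : Type*} [RCLike 𝕜] [NormedAddCommGroup X] [NormedSpace 𝕜 X]
    [NormedSpace ℝ X] [IsScalarTower ℝ 𝕜 X]
    (hX : DaugavetProperty 𝕜 X) (T : X → X) (hT : ∃ C, LipschitzWith C T) :
    ∃ E : Submodule 𝕜 X, IsClosed (E : Set X) ∧
      TopologicalSpace.IsSeparable (E : Set X) ∧ DaugavetProperty 𝕜 ↥E ∧
      (∀ x ∈ E, T x ∈ E) ∧ lipSemi (fun e : ↥E => T (e : X)) = lipSemi T := by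
  have := hX.nontrivial
  obtain ⟨C, hC⟩ := hT
  obtain ⟨p, q, hpq, hlim⟩ := hC.exists_seq_tendsto_lipSemi
  obtain ⟨E, hEc, hEs, hpqE, hTE, hH⟩ :=
    hX.daugavetHullProperty.exists_isSeparable_invariant_submodule (𝕜 := 𝕜) hC.continuous
      ((countable_range p).union (countable_range q))
  have hp n : p n ∈ E := hpqE (.inl ⟨n, rfl⟩)
  have hq n : q n ∈ E := hpqE (.inr ⟨n, rfl⟩)
  have : Nontrivial E := ⟨⟨p 0, hp 0⟩, ⟨q 0, hq 0⟩, fun h => hpq 0 (congrArg Subtype.val h)⟩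
  exact ⟨E, hEc, hEs, hH.daugavetProperty, hTE, hC.lipSemi_comp_subtype_eq E hp hq hpq hlim⟩

/-- Separable determination of the Daugavet property with respect to a Lipschitz map. -/
theorem separable_determination_daugavet {𝕜 X : Type*} [RCLike 𝕜] [NormedAddCommGroup X] [NormedSpace 𝕜 X]
    [NormedSpace ℝ X] [IsScalarTower ℝ 𝕜 X] [CompleteSpace X]
    (hX : DaugavetProperty 𝕜 X) (T : X → X) (hT : ∃ C, LipschitzWith C T) :
    ∃ E : Submodule 𝕜 X, IsClosed (E : Set X) ∧
      TopologicalSpace.IsSeparable (E : Set X) ∧ DaugavetProperty 𝕜 ↥E ∧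
      (∀ x ∈ E, T x ∈ E) ∧ lipSemi (fun e : ↥E => T (e : X)) = lipSemi T :=
  separable_determination_daugavet_general hX T hT
end

section
/- Let X be a Banach space with the alternative Daugavet property and let T: X → X be a Lipschitz map. Then there is a closed separable linear subspace E ⊆ X having the alternative Daugavet property such that T(E) ⊆ E and the Lipschitz seminorm of the restriction T|_E equals the Lipschitz seminorm of T. -/
open Set Metric Topology

/-!
Testing rank-one operators `f ⊗ x`, `X` has the alternative Daugavet property iff for every `x`
in the unit sphere and every `ε > 0` the set `{y ∈ B_X : max_θ ‖x + θ y‖ > 2 - ε}` is norming,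
i.e. (Hahn–Banach) its closed convex hull contains the unit ball. Approximating a point of the ball by convex
combinations of this set needs only finitely many of its points, so one can saturate a countable
set `Ω` under sums, multiplication by a countable dense set of scalars, normalisation, `T`, and
these finite witnesses, starting from pairs of points that almost realise the Lipschitz constant
of `T`. Then `E = closure Ω` is a closed separable `T`-invariant subspace, the witnesses show that
`E` again satisfies the characterisation, and the starting pairs give `‖T|_E‖ = ‖T‖`.
-/

open RCLike

lemma RCLike.exists_norm_eq_one_mul_eq_norm {𝕜 : Type*} [RCLike 𝕜] (w : 𝕜) :
    ∃ ρ : 𝕜, ‖ρ‖ = 1 ∧ ρ * w = ‖w‖ := by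
  rcases eq_or_ne w 0 with rfl | hw
  · exact ⟨1, by simp, by simp⟩
  · refine ⟨‖w‖ / w, ?_, div_mul_cancel₀ _ hw⟩
    rw [norm_div, norm_ofReal, abs_norm, div_self (norm_ne_zero_iff.2 hw)]

lemma norm_sub_inv_norm_smul_self (𝕜 : Type*) [RCLike 𝕜] {Y : Type*} [NormedAddCommGroup Y]
    [NormedSpace 𝕜 Y] {v : Y} (hv : v ≠ 0) : ‖v - (‖v‖⁻¹ : 𝕜) • v‖ = |‖v‖ - 1| := by
  have hv' : ‖v‖ ≠ 0 := norm_ne_zero_iff.2 hv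
  have : v - (‖v‖⁻¹ : 𝕜) • v = ((1 - ‖v‖⁻¹ : ℝ) : 𝕜) • v := by
    rw [ofReal_sub, ofReal_one, ofReal_inv, sub_smul, one_smul]
  rw [this, norm_smul, norm_ofReal, ← abs_norm v, ← abs_mul, abs_norm, sub_mul, one_mul,
    inv_mul_cancel₀ hv']

lemma Set.Countable.exists_countable_superset_closed_under {α : Type*} {s : Set α}
    (hs : s.Countable) (F : α → α → Set α) (hF : ∀ x y, (F x y).Countable) :
    ∃ Ω, s ⊆ Ω ∧ Ω.Countable ∧ ∀ x ∈ Ω, ∀ y ∈ Ω, F x y ⊆ Ω := by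
  set step : Set α → Set α := fun t => t ∪ ⋃ x ∈ t, ⋃ y ∈ t, F x y
  set D : ℕ → Set α := fun n => step^[n] s
  have hD : ∀ n, D (n + 1) = step (D n) := fun n => Function.iterate_succ_apply' step n s
  have hmono : Monotone D := monotone_nat_of_le_succ fun n => (hD n).symm ▸ subset_union_left
  refine ⟨⋃ n, D n, subset_iUnion D 0, countable_iUnion fun n => ?_, ?_⟩
  · induction n with
    | zero => exact hs
    | succ n ih => rw [hD]; exact ih.union (ih.biUnion fun x _ => ih.biUnion fun y _ => hF x y)
  · intro x hx y hy z hz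
    obtain ⟨a, ha⟩ := mem_iUnion.1 hx
    obtain ⟨b, hb⟩ := mem_iUnion.1 hy
    refine mem_iUnion.2 ⟨max a b + 1, ?_⟩
    rw [hD]
    exact Or.inr (mem_biUnion (hmono (le_max_left a b) ha)
      (mem_biUnion (hmono (le_max_right a b) hb) hz))

lemma Submodule.coe_topologicalClosure_span_eq_closure_s14 {R M : Type*} [Semiring R]
    [TopologicalSpace R] [AddCommMonoid M] [Module R M] [TopologicalSpace M] [ContinuousAdd M]
    [ContinuousSMul R M] {Ω : Set M} {D : Set R} (hD : Dense D) (hΩ : Ω.Nonempty)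
    (hadd : ∀ x ∈ Ω, ∀ y ∈ Ω, x + y ∈ Ω) (hsmul : ∀ c ∈ D, ∀ x ∈ Ω, c • x ∈ Ω) :
    ((span R Ω).topologicalClosure : Set M) = closure Ω := by
  have hsmul' : ∀ (c : R) x, x ∈ closure Ω → c • x ∈ closure Ω := fun c x hx =>
    map_mem_closure₂ continuous_smul (hD c) hx hsmul
  have hspan : (span R Ω : Set M) ⊆ closure Ω := fun x hx => by
    induction hx using Submodule.span_induction with
    | mem x hx => exact subset_closure hx
    | zero =>
      obtain ⟨x, hx⟩ := hΩ
      simpa using hsmul' 0 x (subset_closure hx)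
    | add x y _ _ hx hy => exact map_mem_closure₂ continuous_add hx hy hadd
    | smul c x _ hx => exact hsmul' c x hx
  rw [topologicalClosure_coe]
  exact (closure_minimal hspan isClosed_closure).antisymm (closure_mono subset_span)

section LipSemi

variable {X Y : Type*} [NormedAddCommGroup X] [NormedAddCommGroup Y]

def lipRatios (f : X → Y) : Set ℝ :=
  {r | ∃ x₁ x₂ : X, x₁ ≠ x₂ ∧ r = ‖f x₁ - f x₂‖ / ‖x₁ - x₂‖}

lemma LipschitzWith.bddAbove_lipRatios {C : NNReal} {f : X → Y} (hf : LipschitzWith C f) :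
    BddAbove (lipRatios f) := by
  refine ⟨C, ?_⟩
  rintro _ ⟨x₁, x₂, -, rfl⟩
  exact div_le_of_le_mul₀ (norm_nonneg _) C.coe_nonneg (hf.norm_sub_le x₁ x₂)

lemma exists_countable_lipSemi_witnesses [Nontrivial X] (f : X → Y) :
    ∃ s : Set X, s.Countable ∧ ∀ r < lipSemi f,
      ∃ x₁ ∈ s, ∃ x₂ ∈ s, x₁ ≠ x₂ ∧ r < ‖f x₁ - f x₂‖ / ‖x₁ - x₂‖ := by
  have hne : (lipRatios f).Nonempty := by
    obtain ⟨x₁, x₂, h⟩ := exists_pair_ne X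
    exact ⟨_, x₁, x₂, h, rfl⟩
  have : ∀ n : ℕ, ∃ p : X × X, p.1 ≠ p.2 ∧
      lipSemi f - 1 / (n + 1) < ‖f p.1 - f p.2‖ / ‖p.1 - p.2‖ := by
    intro n
    obtain ⟨_, ⟨x₁, x₂, hx, rfl⟩, hlt⟩ :=
      exists_lt_of_lt_csSup hne (sub_lt_self (lipSemi f) Nat.one_div_pos_of_nat)
    exact ⟨(x₁, x₂), hx, hlt⟩
  choose p hp using this
  refine ⟨range (Prod.fst ∘ p) ∪ range (Prod.snd ∘ p),
    (countable_range _).union (countable_range _), fun r hr => ?_⟩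
  obtain ⟨n, hn⟩ := exists_nat_one_div_lt (sub_pos.2 hr)
  exact ⟨(p n).1, .inl ⟨n, rfl⟩, (p n).2, .inr ⟨n, rfl⟩, (hp n).1, by linarith [(hp n).2]⟩

lemma lipSemi_restrict_eq {R : Type*} [Ring R] [Module R X] {C : NNReal} {f : X → Y}
    (hf : LipschitzWith C f) (E : Submodule R X)
    (hE : ∀ r < lipSemi f, ∃ x₁ ∈ E, ∃ x₂ ∈ E, x₁ ≠ x₂ ∧ r < ‖f x₁ - f x₂‖ / ‖x₁ - x₂‖) :
    lipSemi (fun e : E => f e) = lipSemi f := by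
  have hsub : lipRatios (fun e : E => f e) ⊆ lipRatios f := by
    rintro _ ⟨e₁, e₂, hne, rfl⟩
    exact ⟨e₁, e₂, Subtype.coe_ne_coe.2 hne, rfl⟩
  have hmem : ∀ r < lipSemi f, ∃ r' ∈ lipRatios (fun e : E => f e), r < r' := by
    intro r hr
    obtain ⟨x₁, h₁, x₂, h₂, hne, hlt⟩ := hE r hr
    exact ⟨_, ⟨⟨x₁, h₁⟩, ⟨x₂, h₂⟩, by simpa using hne, rfl⟩, hlt⟩
  have hbdd := hf.bddAbove_lipRatios
  apply le_antisymm
  · obtain ⟨r, hr, -⟩ := hmem _ (sub_one_lt (lipSemi f))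
    exact csSup_le_csSup hbdd ⟨r, hr⟩ hsub
  · refine le_of_forall_lt fun r hr => ?_
    obtain ⟨r', hr', hlt⟩ := hmem r hr
    exact hlt.trans_le (le_csSup (hbdd.mono hsub) hr')

end LipSemi

section AltDaugavet

variable {𝕜 : Type*} [RCLike 𝕜] {Y : Type*} [NormedAddCommGroup Y] [NormedSpace 𝕜 Y]

variable (𝕜) in
def altDaugavetSet (x : Y) (ε : ℝ) : Set Y :=
  {y | ‖y‖ ≤ 1 ∧ ∃ θ : 𝕜, ‖θ‖ = 1 ∧ 2 - ε < ‖x + θ • y‖}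

variable (𝕜) in
def IsNormingSet (A : Set Y) : Prop :=
  ∀ f : StrongDual 𝕜 Y, ∀ r < ‖f‖, ∃ a ∈ A, r < re (f a)

lemma self_mem_altDaugavetSet {x : Y} (hx : ‖x‖ = 1) {ε : ℝ} (hε : 0 < ε) :
    x ∈ altDaugavetSet 𝕜 x ε := by
  refine ⟨hx.le, 1, norm_one, ?_⟩
  rw [one_smul, ← two_smul 𝕜 x, norm_smul, hx, mul_one, RCLike.norm_two]
  linarith

lemma smul_mem_altDaugavetSet {x a : Y} {ε : ℝ} (ha : a ∈ altDaugavetSet 𝕜 x ε) {ρ : 𝕜}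
    (hρ : ‖ρ‖ = 1) : ρ • a ∈ altDaugavetSet 𝕜 x ε := by
  obtain ⟨ha, θ, hθ, hlt⟩ := ha
  have hρ0 : ρ ≠ 0 := norm_ne_zero_iff.1 (hρ ▸ one_ne_zero)
  refine ⟨by rwa [norm_smul, hρ, one_mul], θ * ρ⁻¹, by rw [norm_mul, norm_inv, hθ, hρ]; simp, ?_⟩
  rwa [smul_smul, mul_assoc, inv_mul_cancel₀ hρ0, mul_one]

lemma altDaugavetSet_subset {x x' : Y} {ε ε' : ℝ} (h : ε + ‖x - x'‖ ≤ ε') :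
    altDaugavetSet 𝕜 x' ε ⊆ altDaugavetSet 𝕜 x ε' := by
  rintro a ⟨ha, θ, hθ, hlt⟩
  refine ⟨ha, θ, hθ, ?_⟩
  have : ‖x' + θ • a‖ ≤ ‖x + θ • a‖ + ‖x - x'‖ := by
    calc ‖x' + θ • a‖ = ‖(x + θ • a) - (x - x')‖ := by congr 1; abel
      _ ≤ ‖x + θ • a‖ + ‖x - x'‖ := norm_sub_le _ _
  linarith

lemma AltDaugavetProperty.nontrivial (h : AltDaugavetProperty 𝕜 Y) : Nontrivial Y := by
  obtain ⟨⟨θ, -, hθ⟩, -⟩ := h 0 ⟨0, 0, fun _ => by simp⟩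
  by_contra hY
  rw [not_nontrivial_iff_subsingleton] at hY
  simp [Subsingleton.elim (ContinuousLinearMap.id 𝕜 Y) 0] at hθ

lemma AltDaugavetProperty.exists_mem_altDaugavetSet_lt_norm_apply (h : AltDaugavetProperty 𝕜 Y)
    {x : Y} (hx : ‖x‖ = 1) {f : StrongDual 𝕜 Y} (hf : ‖f‖ = 1) {ε : ℝ} (hε : 0 < ε) :
    ∃ z ∈ altDaugavetSet 𝕜 x ε, 1 - ε < ‖f z‖ := by
  obtain ⟨⟨θ, hθ, hnorm⟩, -⟩ := h (f.smulRight x) ⟨f, x, fun _ => rfl⟩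
  rw [ContinuousLinearMap.norm_smulRight_apply, hf, hx, mul_one] at hnorm
  obtain ⟨z, hz, hlt⟩ :=
    (ContinuousLinearMap.id 𝕜 Y + θ • f.smulRight x).exists_lt_apply_of_lt_opNorm
      (show 2 - ε / 2 < _ by rw [← hnorm]; linarith)
  set c := θ * f z
  have happ : (ContinuousLinearMap.id 𝕜 Y + θ • f.smulRight x) z = z + c • x := by
    simp [c, smul_smul]
  rw [happ] at hlt
  have hc : ‖c‖ = ‖f z‖ := by simp [c, hθ]
  have hfz : ‖f z‖ ≤ 1 := (f.unit_le_opNorm z hz.le).trans hf.le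
  have hcx : ‖z + c • x‖ ≤ 1 + ‖c‖ :=
    (norm_add_le _ _).trans (by rw [norm_smul, hx, mul_one]; linarith)
  obtain ⟨ρ, hρ, hρc⟩ := RCLike.exists_norm_eq_one_mul_eq_norm c
  -- `ρ` rotates the coefficient `c ≈ 1` of `x` to the real number `‖c‖`
  have hrot : x + ρ • z = ρ • (z + c • x) + ((1 - ‖c‖ : ℝ) : 𝕜) • x := by
    rw [smul_add, smul_smul, hρc, ofReal_sub, ofReal_one, sub_smul, one_smul]; abel
  have hrest : ‖((1 - ‖c‖ : ℝ) : 𝕜) • x‖ = 1 - ‖c‖ := by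
    rw [norm_smul, hx, mul_one, norm_ofReal, abs_of_nonneg (by linarith)]
  refine ⟨z, ⟨hz.le, ρ, hρ, ?_⟩, by linarith⟩
  calc 2 - ε < ‖ρ • (z + c • x)‖ - ‖((1 - ‖c‖ : ℝ) : 𝕜) • x‖ := by
        rw [norm_smul, hρ, one_mul, hrest]; linarith
    _ ≤ ‖x + ρ • z‖ := hrot ▸ norm_sub_le_norm_add _ _

lemma AltDaugavetProperty.isNormingSet_altDaugavetSet (h : AltDaugavetProperty 𝕜 Y) {x : Y}
    (hx : ‖x‖ = 1) {ε : ℝ} (hε : 0 < ε) : IsNormingSet 𝕜 (altDaugavetSet 𝕜 x ε) := by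
  intro f r hr
  rcases eq_or_ne f 0 with rfl | hf
  · exact ⟨x, self_mem_altDaugavetSet hx hε, by simpa using hr⟩
  have hf0 : 0 < ‖f‖ := norm_pos_iff.2 hf
  set δ := min ε (1 - r / ‖f‖)
  have hδ : 0 < δ := lt_min hε (by rwa [sub_pos, div_lt_one hf0])
  have hg : ‖((‖f‖⁻¹ : ℝ) : 𝕜) • f‖ = 1 := by
    rw [norm_smul, norm_ofReal, abs_inv, abs_norm, inv_mul_cancel₀ hf0.ne']
  obtain ⟨z, hz, hlt⟩ := h.exists_mem_altDaugavetSet_lt_norm_apply hx hg hδ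
  obtain ⟨ρ, hρ, hρf⟩ := RCLike.exists_norm_eq_one_mul_eq_norm (f z)
  refine ⟨ρ • z, smul_mem_altDaugavetSet (altDaugavetSet_subset ?_ hz) hρ, ?_⟩
  · rw [sub_self, norm_zero, add_zero]; exact min_le_left _ _
  rw [map_smul, smul_eq_mul, hρf, ofReal_re]
  rw [smul_apply, smul_eq_mul, norm_mul, norm_ofReal, abs_inv, abs_norm,
    inv_mul_eq_div] at hlt
  have := min_le_right ε (1 - r / ‖f‖)
  exact (div_lt_div_iff_of_pos_right hf0).1 (by linarith)

lemma RankOne.exists_norm_eq_one [Nontrivial Y] {T : Y →L[𝕜] Y} (hT : RankOne 𝕜 T) :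
    ∃ (g : StrongDual 𝕜 Y) (u : Y), ‖u‖ = 1 ∧ ∀ x, T x = g x • u := by
  obtain ⟨g, u, hT⟩ := hT
  rcases eq_or_ne u 0 with rfl | hu
  · obtain ⟨v, hv⟩ := exists_ne (0 : Y)
    exact ⟨0, _, norm_smul_inv_norm (𝕜 := 𝕜) hv, fun x => by simp [hT]⟩
  · refine ⟨(‖u‖ : 𝕜) • g, (‖u‖⁻¹ : 𝕜) • u, norm_smul_inv_norm hu, fun x => ?_⟩
    have : (‖u‖ : 𝕜) ≠ 0 := ofReal_ne_zero.2 (norm_ne_zero_iff.2 hu)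
    rw [hT, smul_apply, smul_smul, smul_eq_mul, mul_comm, ← mul_assoc,
      inv_mul_cancel₀ this, one_mul]

lemma norm_add_ofReal_smul_ge {v w : Y} (hv : ‖v‖ = 1) (hw : ‖w‖ ≤ 1) {η s : ℝ}
    (hvw : 2 - η < ‖v + w‖) (hs : 0 ≤ s) : (1 + s) * (1 - η) ≤ ‖w + (s : 𝕜) • v‖ := by
  have hη : 0 < η := by linarith [norm_add_le v w]
  rcases le_total s 1 with hs1 | hs1
  · have hsplit : w + (s : 𝕜) • v = (v + w) - ((1 - s : ℝ) : 𝕜) • v := by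
      rw [ofReal_sub, ofReal_one, sub_smul, one_smul]; abel
    have := norm_sub_norm_le (v + w) (((1 - s : ℝ) : 𝕜) • v)
    rw [← hsplit, norm_smul, hv, mul_one, norm_ofReal, abs_of_nonneg (by linarith)] at this
    nlinarith
  · have hsplit : w + (s : 𝕜) • v = (s : 𝕜) • (v + w) - ((s - 1 : ℝ) : 𝕜) • w := by
      rw [ofReal_sub, ofReal_one, sub_smul, one_smul, smul_add]; abel
    have := norm_sub_norm_le ((s : 𝕜) • (v + w)) (((s - 1 : ℝ) : 𝕜) • w)
    rw [← hsplit, norm_smul, norm_smul, norm_ofReal, norm_ofReal, abs_of_nonneg hs,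
      abs_of_nonneg (by linarith)] at this
    nlinarith [mul_le_of_le_one_right (by linarith : (0 : ℝ) ≤ s - 1) hw]

lemma exists_lt_norm_id_add_smul_of_isNormingSet {T : Y →L[𝕜] Y} {g : StrongDual 𝕜 Y} {u : Y}
    (hu : ‖u‖ = 1) (hT : ∀ x, T x = g x • u) {η : ℝ} (hη : 0 < η) (hη1 : η < 1)
    (hA : IsNormingSet 𝕜 (altDaugavetSet 𝕜 u η)) :
    ∃ θ : 𝕜, ‖θ‖ = 1 ∧ (1 + ‖g‖ - η) * (1 - η) < ‖ContinuousLinearMap.id 𝕜 Y + θ • T‖ := by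
  obtain ⟨a, ⟨ha, θ, hθ, hua⟩, hga⟩ := hA g (‖g‖ - η) (by linarith)
  obtain ⟨ρ, hρ, hρg⟩ := RCLike.exists_norm_eq_one_mul_eq_norm (g a)
  have hθ0 : θ ≠ 0 := norm_ne_zero_iff.1 (hθ ▸ one_ne_zero)
  refine ⟨θ⁻¹ * ρ, by rw [norm_mul, norm_inv, hθ, hρ]; simp, ?_⟩
  have happ : (ContinuousLinearMap.id 𝕜 Y + (θ⁻¹ * ρ) • T) a
      = θ⁻¹ • (θ • a + (‖g a‖ : 𝕜) • u) := by
    rw [smul_add, smul_smul, inv_mul_cancel₀ hθ0, one_smul, smul_smul, ← hρg]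
    simp [hT, smul_smul, mul_assoc]
  calc (1 + ‖g‖ - η) * (1 - η) < (1 + ‖g a‖) * (1 - η) := by
        gcongr; linarith [re_le_norm (g a)]
    _ ≤ ‖θ • a + (‖g a‖ : 𝕜) • u‖ :=
        norm_add_ofReal_smul_ge hu (by rwa [norm_smul, hθ, one_mul]) hua (norm_nonneg _)
    _ = ‖(ContinuousLinearMap.id 𝕜 Y + (θ⁻¹ * ρ) • T) a‖ := by
        rw [happ, norm_smul, norm_inv, hθ, inv_one, one_mul]
    _ ≤ _ := ContinuousLinearMap.unit_le_opNorm _ _ ha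

lemma isGreatest_of_forall_le_of_forall_lt {K : Type*} [NormedField K] [ProperSpace K]
    {φ : K → ℝ} (hφ : Continuous φ) {M : ℝ} (hle : ∀ θ : K, ‖θ‖ = 1 → φ θ ≤ M)
    (hlt : ∀ M' < M, ∃ θ : K, ‖θ‖ = 1 ∧ M' < φ θ) :
    IsGreatest {r | ∃ θ : K, ‖θ‖ = 1 ∧ r = φ θ} M := by
  obtain ⟨θ₁, hθ₁, -⟩ := hlt (M - 1) (sub_one_lt M)
  obtain ⟨θ₀, hθ₀, hmax⟩ := (isCompact_sphere (0 : K) 1).exists_isMaxOn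
    ⟨θ₁, mem_sphere_zero_iff_norm.2 hθ₁⟩ hφ.continuousOn
  rw [mem_sphere_zero_iff_norm] at hθ₀
  refine ⟨⟨θ₀, hθ₀, le_antisymm ?_ (hle θ₀ hθ₀)⟩, by rintro _ ⟨θ, hθ, rfl⟩; exact hle θ hθ⟩
  refine le_of_forall_lt fun M' hM' => ?_
  obtain ⟨θ, hθ, hlt⟩ := hlt M' hM'
  exact hlt.trans_le (hmax (mem_sphere_zero_iff_norm.2 hθ))

lemma altDaugavetProperty_of_isNormingSet [Nontrivial Y]
    (h : ∀ x : Y, ‖x‖ = 1 → ∀ ε > 0, IsNormingSet 𝕜 (altDaugavetSet 𝕜 x ε)) :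
    AltDaugavetProperty 𝕜 Y := by
  intro T hT
  obtain ⟨g, u, hu, hTgu⟩ := hT.exists_norm_eq_one
  have hT : ‖T‖ = ‖g‖ := by
    rw [show T = g.smulRight u from ContinuousLinearMap.ext hTgu,
      ContinuousLinearMap.norm_smulRight_apply, hu, mul_one]
  refine isGreatest_of_forall_le_of_forall_lt (by fun_prop) (fun θ hθ => ?_) (fun M hM => ?_)
  · calc ‖ContinuousLinearMap.id 𝕜 Y + θ • T‖
        ≤ ‖ContinuousLinearMap.id 𝕜 Y‖ + ‖θ • T‖ := norm_add_le _ _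
      _ ≤ 1 + ‖T‖ := by
        rw [norm_smul, hθ, one_mul]; gcongr; exact ContinuousLinearMap.norm_id_le
  · rw [hT] at hM
    -- `(1 + ‖g‖ - η) * (1 - η) ≥ 1 + ‖g‖ - η * (2 + ‖g‖) ≥ M`
    set η := min (1 / 2) ((1 + ‖g‖ - M) / (2 + ‖g‖))
    have hη : 0 < η := lt_min one_half_pos (div_pos (by linarith) (by positivity))
    have hηM : η * (2 + ‖g‖) ≤ 1 + ‖g‖ - M :=
      (le_div_iff₀ (by positivity)).1 (min_le_right _ _)
    obtain ⟨θ, hθ, hlt⟩ := exists_lt_norm_id_add_smul_of_isNormingSet hu hTgu hη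
      ((min_le_left _ _).trans_lt (by norm_num)) (h u hu η hη)
    exact ⟨θ, hθ, by nlinarith⟩

section Convex

variable [NormedSpace ℝ Y] [IsScalarTower ℝ 𝕜 Y]

variable (𝕜) in
lemma ball_subset_closure_convexHull_iff_isNormingSet (A : Set Y) :
    ball (0 : Y) 1 ⊆ closure (convexHull ℝ A) ↔ IsNormingSet 𝕜 A := by
  constructor
  · intro hA f r hr
    by_contra! hle
    have hconv : Convex ℝ {v | re (f v) ≤ r} :=
      convex_halfSpace_le ⟨fun a b => by simp, fun c a => by simp [RCLike.smul_re]⟩ r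
    have hK : closure (convexHull ℝ A) ⊆ {v | re (f v) ≤ r} :=
      closure_minimal (convexHull_min hle hconv) (isClosed_le (by fun_prop) continuous_const)
    obtain ⟨z, hz, hrz⟩ := f.exists_lt_apply_of_lt_opNorm hr
    obtain ⟨ρ, hρ, hρz⟩ := RCLike.exists_norm_eq_one_mul_eq_norm (f z)
    have : re (f (ρ • z)) ≤ r := hK (hA (by simpa [norm_smul, hρ] using hz))
    rw [map_smul, smul_eq_mul, hρz, ofReal_re] at this
    linarith
  · intro h y hy
    by_contra hy'
    obtain ⟨g, u, hgu, hu⟩ := geometric_hahn_banach_closed_point (𝕜 := 𝕜)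
      (convex_convexHull ℝ A).closure isClosed_closure hy'
    obtain ⟨a, ha, hua⟩ := h g u (hu.trans_le
      ((re_le_norm _).trans (g.unit_le_opNorm y (mem_ball_zero_iff.1 hy).le)))
    exact (hgu a (subset_closure (subset_convexHull ℝ A ha))).not_gt hua

lemma altDaugavetProperty_iff_ball_subset [Nontrivial Y] :
    AltDaugavetProperty 𝕜 Y ↔ ∀ x : Y, ‖x‖ = 1 → ∀ ε > 0,
      ball (0 : Y) 1 ⊆ closure (convexHull ℝ (altDaugavetSet 𝕜 x ε)) := by
  simp only [ball_subset_closure_convexHull_iff_isNormingSet 𝕜]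
  exact ⟨fun h x hx ε hε => h.isNormingSet_altDaugavetSet hx hε,
    altDaugavetProperty_of_isNormingSet⟩

end Convex

end AltDaugavet

section Separable

variable {𝕜 : Type*} [RCLike 𝕜] {X : Type*} [NormedAddCommGroup X] [NormedSpace 𝕜 X]

lemma exists_mem_norm_eq_one_dist_lt {Ω : Set X} (hΩ : ∀ v ∈ Ω, (‖v‖⁻¹ : 𝕜) • v ∈ Ω) {x : X}
    (hx : x ∈ closure Ω) (hx1 : ‖x‖ = 1) {δ : ℝ} (hδ : 0 < δ) :
    ∃ x' ∈ Ω, ‖x'‖ = 1 ∧ dist x x' < δ := by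
  obtain ⟨v, hv, hxv⟩ := Metric.mem_closure_iff.1 hx (min (δ / 2) 1) (by positivity)
  rw [dist_eq_norm] at hxv
  have hv0 : v ≠ 0 := by
    rintro rfl
    simp [hx1] at hxv
  refine ⟨_, hΩ v hv, norm_smul_inv_norm hv0, ?_⟩
  have hnorm : ‖v - (‖v‖⁻¹ : 𝕜) • v‖ ≤ ‖x - v‖ := by
    rw [norm_sub_inv_norm_smul_self 𝕜 hv0, ← hx1, norm_sub_rev x v]
    exact abs_norm_sub_norm_le v x
  calc dist x _ = ‖(x - v) + (v - (‖v‖⁻¹ : 𝕜) • v)‖ := by rw [dist_eq_norm, sub_add_sub_cancel]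
    _ ≤ ‖x - v‖ + ‖v - (‖v‖⁻¹ : 𝕜) • v‖ := norm_add_le _ _
    _ < δ := by linarith [min_le_left (δ / 2) 1]

lemma mem_closure_convexHull_altDaugavetSet_inter [Module ℝ X] {Ω : Set X}
    (hnorm : ∀ v ∈ Ω, (‖v‖⁻¹ : 𝕜) • v ∈ Ω)
    (hwit : ∀ x ∈ Ω, ∀ y ∈ Ω, ‖x‖ = 1 → ‖y‖ < 1 → ∀ n : ℕ,
      ∃ p ∈ convexHull ℝ (altDaugavetSet 𝕜 x (1 / (n + 1)) ∩ Ω), dist y p < 1 / (n + 1))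
    {x y : X} (hx : x ∈ closure Ω) (hx1 : ‖x‖ = 1) (hy : y ∈ closure Ω) (hy1 : ‖y‖ < 1)
    {ε : ℝ} (hε : 0 < ε) : y ∈ closure (convexHull ℝ (altDaugavetSet 𝕜 x ε ∩ Ω)) := by
  refine Metric.mem_closure_iff.2 fun δ hδ => ?_
  obtain ⟨n, hn⟩ := exists_nat_one_div_lt (lt_min (half_pos hε) (half_pos hδ))
  set η : ℝ := 1 / (n + 1)
  have hη : 0 < η := Nat.one_div_pos_of_nat
  obtain ⟨x', hx'Ω, hx'1, hxx'⟩ := exists_mem_norm_eq_one_dist_lt hnorm hx hx1 hη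
  obtain ⟨y', hy'Ω, hyy'⟩ :=
    Metric.mem_closure_iff.1 hy (min η (1 - ‖y‖)) (lt_min hη (sub_pos.2 hy1))
  have hy'1 : ‖y'‖ < 1 := by
    have := norm_le_norm_add_norm_sub' y' y
    rw [← dist_eq_norm, dist_comm] at this
    linarith [min_le_right η (1 - ‖y‖)]
  obtain ⟨p, hp, hy'p⟩ := hwit x' hx'Ω y' hy'Ω hx'1 hy'1 n
  refine ⟨p, convexHull_mono (inter_subset_inter_left _ (altDaugavetSet_subset ?_)) hp, ?_⟩
  · rw [← dist_eq_norm]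
    linarith [min_le_left (ε / 2) (δ / 2)]
  · calc dist y p ≤ dist y y' + dist y' p := dist_triangle _ _ _
      _ < δ := by linarith [min_le_left η (1 - ‖y‖), min_le_right (ε / 2) (δ / 2)]

variable [NormedSpace ℝ X] [IsScalarTower ℝ 𝕜 X]

lemma AltDaugavetProperty.exists_countable_witnesses (h : AltDaugavetProperty 𝕜 X) :
    ∃ W : X → X → ℕ → Set X, (∀ x y n, (W x y n).Countable) ∧
      ∀ x y n, ‖x‖ = 1 → ‖y‖ < 1 → W x y n ⊆ altDaugavetSet 𝕜 x (1 / (n + 1)) ∧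
        ∃ p ∈ convexHull ℝ (W x y n), dist y p < 1 / (n + 1) := by
  have := h.nontrivial
  have : ∀ (x y : X) (n : ℕ), ∃ t : Set X, t.Countable ∧ (‖x‖ = 1 → ‖y‖ < 1 →
      t ⊆ altDaugavetSet 𝕜 x (1 / (n + 1)) ∧ ∃ p ∈ convexHull ℝ t, dist y p < 1 / (n + 1)) := by
    intro x y n
    by_cases hxy : ‖x‖ = 1 ∧ ‖y‖ < 1
    · have hy := altDaugavetProperty_iff_ball_subset.1 h x hxy.1 (1 / (n + 1))
        Nat.one_div_pos_of_nat (mem_ball_zero_iff.2 hxy.2)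
      obtain ⟨p, hp, hyp⟩ := Metric.mem_closure_iff.1 hy _ Nat.one_div_pos_of_nat
      rw [convexHull_eq_union_convexHull_finite_subsets, mem_iUnion₂] at hp
      obtain ⟨t, htA, hpt⟩ := hp
      exact ⟨t, t.countable_toSet, fun _ _ => ⟨htA, p, hpt, hyp⟩⟩
    · exact ⟨∅, countable_empty, fun hx hy => (hxy ⟨hx, hy⟩).elim⟩
  choose W hWc hW using this
  exact ⟨W, hWc, hW⟩

lemma Submodule.mem_closure_convexHull_altDaugavetSet_of_coe (E : Submodule 𝕜 X) {x y : E}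
    {ε : ℝ} (h : (y : X) ∈ closure (convexHull ℝ (altDaugavetSet 𝕜 (x : X) ε ∩ E))) :
    y ∈ closure (convexHull ℝ (altDaugavetSet 𝕜 x ε)) := by
  have himage : ((↑) : E → X) '' altDaugavetSet 𝕜 x ε = altDaugavetSet 𝕜 (x : X) ε ∩ E := by
    ext v
    constructor
    · rintro ⟨w, hw, rfl⟩
      exact ⟨hw, w.2⟩
    · rintro ⟨hv, hvE⟩
      exact ⟨⟨v, hvE⟩, hv, rfl⟩
  rw [IsEmbedding.subtypeVal.closure_eq_preimage_closure_image, mem_preimage]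
  have := (E.subtype.restrictScalars ℝ).image_convexHull (altDaugavetSet 𝕜 x ε)
  simp only [LinearMap.coe_restrictScalars, coe_subtype] at this
  rwa [this, himage]

lemma Submodule.altDaugavetProperty_of_eq_closure {E : Submodule 𝕜 X} [Nontrivial E] {Ω : Set X}
    (hE : (E : Set X) = closure Ω) (hnorm : ∀ v ∈ Ω, (‖v‖⁻¹ : 𝕜) • v ∈ Ω)
    (hwit : ∀ x ∈ Ω, ∀ y ∈ Ω, ‖x‖ = 1 → ‖y‖ < 1 → ∀ n : ℕ,
      ∃ p ∈ convexHull ℝ (altDaugavetSet 𝕜 x (1 / (n + 1)) ∩ Ω), dist y p < 1 / (n + 1)) :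
    AltDaugavetProperty 𝕜 E := by
  refine altDaugavetProperty_iff_ball_subset.2 fun x hx ε hε y hy =>
    E.mem_closure_convexHull_altDaugavetSet_of_coe ?_
  refine closure_mono (convexHull_mono (inter_subset_inter_right _ (hE ▸ subset_closure))) ?_
  exact mem_closure_convexHull_altDaugavetSet_inter hnorm hwit (hE ▸ x.2) hx (hE ▸ y.2)
    (mem_ball_zero_iff.1 hy) hε

end Separable

theorem separable_determination_alt_daugavet_general {𝕜 X : Type*} [RCLike 𝕜] [NormedAddCommGroup X] [NormedSpace 𝕜 X]
    [NormedSpace ℝ X] [IsScalarTower ℝ 𝕜 X]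
    (hX : AltDaugavetProperty 𝕜 X) (T : X → X) (hT : ∃ C, LipschitzWith C T) :
    ∃ E : Submodule 𝕜 X, IsClosed (E : Set X) ∧
      TopologicalSpace.IsSeparable (E : Set X) ∧ AltDaugavetProperty 𝕜 ↥E ∧
      (∀ x ∈ E, T x ∈ E) ∧ lipSemi (fun e : ↥E => T (e : X)) = lipSemi T := by
  obtain ⟨C, hC⟩ := hT
  have := hX.nontrivial
  obtain ⟨s, hs, hlip⟩ := exists_countable_lipSemi_witnesses T
  obtain ⟨D, hDc, hD⟩ := TopologicalSpace.exists_countable_dense 𝕜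
  obtain ⟨W, hWc, hW⟩ := hX.exists_countable_witnesses
  obtain ⟨Ω, hsΩ, hΩc, hΩ⟩ := hs.exists_countable_superset_closed_under
    (fun x y => {x + y, T x, (‖x‖⁻¹ : 𝕜) • x} ∪ (· • x) '' D ∪ ⋃ n, W x y n)
    fun x y => ((toFinite _).countable.union (hDc.image _)).union (countable_iUnion (hWc x y))
  obtain ⟨x₁, hx₁, x₂, hx₂, hne, -⟩ := hlip _ (sub_one_lt _)
  set E := (Submodule.span 𝕜 Ω).topologicalClosure
  have hE : (E : Set X) = closure Ω := Submodule.coe_topologicalClosure_span_eq_closure_s14 hD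
    ⟨x₁, hsΩ hx₁⟩ (fun x hx y hy => hΩ x hx y hy (by simp))
    fun c hc x hx => hΩ x hx x hx (.inl (.inr ⟨c, hc, rfl⟩))
  have hΩE : Ω ⊆ E := hE ▸ subset_closure
  have : Nontrivial E := ⟨⟨x₁, hΩE (hsΩ hx₁)⟩, ⟨x₂, hΩE (hsΩ hx₂)⟩, by simpa using hne⟩
  refine ⟨E, Submodule.isClosed_topologicalClosure _, hE ▸ hΩc.isSeparable.closure,
    E.altDaugavetProperty_of_eq_closure hE (fun v hv => hΩ v hv v hv (by simp))
      fun x hx y hy hx1 hy1 n => ?_, fun x hx => ?_, lipSemi_restrict_eq hC E fun r hr => ?_⟩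
  · obtain ⟨hWA, p, hp, hyp⟩ := hW x y n hx1 hy1
    exact ⟨p, convexHull_mono (subset_inter hWA fun z hz => hΩ x hx y hy
      (.inr (mem_iUnion.2 ⟨n, hz⟩))) hp, hyp⟩
  · rw [← SetLike.mem_coe, hE] at hx ⊢
    exact MapsTo.closure (fun v hv => hΩ v hv v hv (by simp)) hC.continuous hx
  · obtain ⟨x₁, h₁, x₂, h₂, h⟩ := hlip r hr
    exact ⟨x₁, hΩE (hsΩ h₁), x₂, hΩE (hsΩ h₂), h⟩

/-- Separable determination of the alternative Daugavet property with respect to a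
Lipschitz map. -/
theorem separable_determination_alt_daugavet {𝕜 X : Type*} [RCLike 𝕜] [NormedAddCommGroup X] [NormedSpace 𝕜 X]
    [NormedSpace ℝ X] [IsScalarTower ℝ 𝕜 X] [CompleteSpace X]
    (hX : AltDaugavetProperty 𝕜 X) (T : X → X) (hT : ∃ C, LipschitzWith C T) :
    ∃ E : Submodule 𝕜 X, IsClosed (E : Set X) ∧
      TopologicalSpace.IsSeparable (E : Set X) ∧ AltDaugavetProperty 𝕜 ↥E ∧
      (∀ x ∈ E, T x ∈ E) ∧ lipSemi (fun e : ↥E => T (e : X)) = lipSemi T :=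
  separable_determination_alt_daugavet_general hX T hT
end
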